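/- Let k be a commutative ring, A an associative unital k-algebra, and R ∈ (A⊗A)^× an invertible solution of the quantum Yang–Baxter equation R^{1,2}R^{1,3}R^{2,3} = R^{2,3}R^{1,3}R^{1,2} in A^{⊗3}. Then for every n ≥ 2, in A^{⊗n} (slots numbered 1,…,n, products in increasing order of i): (R^{1,2})^{-1} · (∏_{i=3}^{n} (R^{2,i}R^{1,i})^{-1}) · R^{1,2} = ∏_{i=3}^{n} (R^{1,i}R^{2,i})^{-1}. -/

import Mathlib

/-!
STATEMENT 3: For an invertible solution `R` of the quantum Yang–Baxter equation, the
conjugation identity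
`(R^{1,2})⁻¹ · ∏_{i=3}^{n} (R^{2,i}R^{1,i})⁻¹ · R^{1,2} = ∏_{i=3}^{n} (R^{1,i}R^{2,i})⁻¹`
holds in `A^{⊗n}`.
-/

open scoped TensorProduct

noncomputable section

variable (k : Type*) [CommRing k]
variable (A : Type*) [Ring A] [Algebra k A]
variable (n : ℕ)

/-- `A^{⊗n}`. -/
abbrev TPow := ⨂[k] (_ : Fin n), A

/-- distinct slot inclusions of `A` into `A^{⊗n}` have commuting ranges. -/
theorem commute_single {i j : Fin n} (h : i ≠ j) (a b : A) :
    Commute ((PiTensorProduct.singleAlgHom (R := k) (A := fun _ : Fin n => A) i) a)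
      ((PiTensorProduct.singleAlgHom (R := k) (A := fun _ : Fin n => A) j) b) := by
  have h1 : Commute (Pi.mulSingle (M := fun _ : Fin n => A) i a)
      (Pi.mulSingle (M := fun _ : Fin n => A) j b) := Pi.mulSingle_commute (f := fun _ : Fin n => A) h a b
  simpa [PiTensorProduct.singleAlgHom, MonoidHom.mulSingle_apply] using h1.tprod (R := k)

/-- The two-leg embedding `A ⊗ A → A^{⊗n}` placing the two components in
(distinct) slots `i` and `j`. -/
def leg2 (i j : Fin n) (h : i ≠ j) : (A ⊗[k] A) →ₐ[k] TPow k A n :=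
  Algebra.TensorProduct.lift
    (PiTensorProduct.singleAlgHom (R := k) (A := fun _ : Fin n => A) i)
    (PiTensorProduct.singleAlgHom (R := k) (A := fun _ : Fin n => A) j)
    (fun a b => commute_single k A n h a b)

/-- `x ↦ x^{i,j}` at the level of units, with slots of `A^{⊗n}` numbered `1, …, n`;
junk value `1` if the indices are out of range or equal. -/
def uleg (i j : ℕ) (u : (A ⊗[k] A)ˣ) : (TPow k A n)ˣ :=
  if h : 1 ≤ i ∧ i ≤ n ∧ 1 ≤ j ∧ j ≤ n ∧ i ≠ j then
    Units.map (leg2 k A n ⟨i - 1, by omega⟩ ⟨j - 1, by omega⟩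
      (Fin.ne_of_val_ne (by simp only []; omega))).toMonoidHom u
  else 1

/-- The ordered product `∏_{i=a}^{b} f i` (in increasing order of `i`). -/
def ordProd {M : Type*} [Monoid M] (a b : ℕ) (f : ℕ → M) : M :=
  ((List.range' a (b + 1 - a)).map f).prod

/-! The Yang–Baxter equation transported along the algebra map `A^{⊗3} → A^{⊗n}` that sends the
slots `1, 2, 3` to `1, 2, i` reads `R^{1,2}R^{1,i}R^{2,i} = R^{2,i}R^{1,i}R^{1,2}`, i.e. conjugation
by `R^{1,2}` turns `(R^{2,i}R^{1,i})⁻¹` into `(R^{1,i}R^{2,i})⁻¹`. Conjugation is multiplicative, so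
the identity holds factor by factor. -/

open Function

theorem Function.Injective.extend_update {ι κ M : Type*} [DecidableEq ι] [DecidableEq κ]
    {σ : ι → κ} (hσ : Injective σ) (x : ι → M) (e : κ → M) (i : ι) (v : M) :
    extend σ (update x i v) e = update (extend σ x e) (σ i) v := by
  funext j
  by_cases hj : ∃ i', σ i' = j
  · obtain ⟨i', rfl⟩ := hj
    rcases eq_or_ne i' i with rfl | h
    · simp [hσ.extend_apply]
    · rw [hσ.extend_apply, update_of_ne h, update_of_ne (hσ.ne h), hσ.extend_apply]
  · rw [extend_apply' _ _ _ hj, update_of_ne (fun h => hj ⟨i, h.symm⟩), extend_apply' _ _ _ hj]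

theorem Function.Injective.extend_mulSingle {ι κ M : Type*} [DecidableEq ι] [DecidableEq κ]
    [One M] {σ : ι → κ} (hσ : Injective σ) (i : ι) (a : M) :
    extend σ (Pi.mulSingle i a) 1 = Pi.mulSingle (σ i) a := by
  rw [Pi.mulSingle, hσ.extend_update, extend_one, Pi.mulSingle]

namespace PiTensorProduct
variable {R B ι κ : Type*} [CommSemiring R] [Semiring B] [Algebra R B] {σ : ι → κ}

def tprodExtendByOne (hσ : Injective σ) :
    MultilinearMap R (fun _ : ι => B) (⨂[R] _ : κ, B) where
  toFun x := tprod R (extend σ x 1)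
  map_update_add' x i a b := by
    classical
    simp only [hσ.extend_update, MultilinearMap.map_update_add]
  map_update_smul' x i c a := by
    classical
    simp only [hσ.extend_update, MultilinearMap.map_update_smul]

def extendByOneAlgHom (hσ : Injective σ) : (⨂[R] _ : ι, B) →ₐ[R] ⨂[R] _ : κ, B :=
  liftAlgHom (tprodExtendByOne hσ) (map_one ((tprodMonoidHom R).comp (ExtendByOne.hom B σ)))
    (map_mul ((tprodMonoidHom R).comp (ExtendByOne.hom B σ)))

theorem extendByOneAlgHom_singleAlgHom [DecidableEq ι] [DecidableEq κ] (hσ : Injective σ) (i : ι)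
    (a : B) :
    extendByOneAlgHom hσ (singleAlgHom i a) =
      singleAlgHom (R := R) (A := fun _ : κ => B) (σ i) a := by
  simp [extendByOneAlgHom, tprodExtendByOne, hσ.extend_mulSingle]

end PiTensorProduct

open PiTensorProduct

theorem inv_mul_inv_mul_mul_eq_of_mul_mul_eq {G : Type*} [Group G] {s u v : G}
    (h : s * u * v = v * u * s) : s⁻¹ * (v * u)⁻¹ * s = (u * v)⁻¹ := by
  rw [← mul_inv_rev, ← h]
  group

theorem inv_mul_list_prod_map_mul {G ι : Type*} [Group G] (s : G) {f g : ι → G} {l : List ι}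
    (h : ∀ i ∈ l, s⁻¹ * f i * s = g i) : s⁻¹ * (l.map f).prod * s = (l.map g).prod := by
  calc s⁻¹ * (l.map f).prod * s = MulAut.conj s⁻¹ (l.map f).prod := by simp
    _ = (l.map g).prod := by
      rw [map_list_prod, List.map_map]
      exact congrArg _ (List.map_congr_left fun i hi => by simpa using h i hi)

theorem uleg_succ_succ {p q : Fin n} (h : p ≠ q) (u : (A ⊗[k] A)ˣ) :
    uleg k A n (p + 1) (q + 1) u = Units.map (leg2 k A n p q h).toMonoidHom u := by
  rw [uleg, dif_pos (by omega)]
  rfl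

theorem extendByOneAlgHom_leg2 {m : ℕ} {σ : Fin m → Fin n} (hσ : Injective σ) {p q : Fin m}
    (h : p ≠ q) (z : A ⊗[k] A) :
    extendByOneAlgHom hσ (leg2 k A m p q h z) = leg2 k A n (σ p) (σ q) (hσ.ne h) z := by
  rw [← AlgHom.comp_apply]
  congr 1
  refine Algebra.TensorProduct.ext' fun a b => ?_
  simp only [AlgHom.comp_apply, leg2, Algebra.TensorProduct.lift_tmul, map_mul,
    extendByOneAlgHom_singleAlgHom]

theorem map_extendByOneAlgHom_uleg {m : ℕ} {σ : Fin m → Fin n} (hσ : Injective σ)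
    {p q : Fin m} (h : p ≠ q) (u : (A ⊗[k] A)ˣ) :
    Units.map (extendByOneAlgHom hσ).toMonoidHom (uleg k A m (p + 1) (q + 1) u) =
      uleg k A n (σ p + 1) (σ q + 1) u := by
  ext
  simp [uleg_succ_succ k A _ h, uleg_succ_succ k A _ (hσ.ne h), extendByOneAlgHom_leg2]

theorem uleg_yangBaxter_of_ne {a b c : Fin n} (hab : a ≠ b) (hac : a ≠ c) (hbc : b ≠ c)
    (R : (A ⊗[k] A)ˣ)
    (hQYBE : uleg k A 3 1 2 R * uleg k A 3 1 3 R * uleg k A 3 2 3 R =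
      uleg k A 3 2 3 R * uleg k A 3 1 3 R * uleg k A 3 1 2 R) :
    uleg k A n (a + 1) (b + 1) R * uleg k A n (a + 1) (c + 1) R * uleg k A n (b + 1) (c + 1) R =
      uleg k A n (b + 1) (c + 1) R * uleg k A n (a + 1) (c + 1) R *
        uleg k A n (a + 1) (b + 1) R := by
  have hσ : Injective ![a, b, c] := by
    intro x y
    fin_cases x <;> fin_cases y <;> simp [hab, hac, hbc, hab.symm, hac.symm, hbc.symm]
  have e12 := map_extendByOneAlgHom_uleg k A n hσ (p := 0) (q := 1) (by decide) R
  have e13 := map_extendByOneAlgHom_uleg k A n hσ (p := 0) (q := 2) (by decide) R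
  have e23 := map_extendByOneAlgHom_uleg k A n hσ (p := 1) (q := 2) (by decide) R
  simp only [Fin.isValue, Fin.val_zero, Fin.val_one, Fin.val_two, Matrix.cons_val_zero,
    Matrix.cons_val_one, Matrix.cons_val_two, Matrix.tail_cons,
    Matrix.head_cons] at e12 e13 e23
  simpa only [map_mul, e12, e13, e23] using
    congrArg (Units.map (extendByOneAlgHom hσ).toMonoidHom) hQYBE

theorem qybe_conjugation_identity (R : (A ⊗[k] A)ˣ)
    -- the quantum Yang–Baxter equation `R^{1,2}R^{1,3}R^{2,3} = R^{2,3}R^{1,3}R^{1,2}`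
    -- in `A^{⊗3}`
    (hQYBE : uleg k A 3 1 2 R * uleg k A 3 1 3 R * uleg k A 3 2 3 R =
      uleg k A 3 2 3 R * uleg k A 3 1 3 R * uleg k A 3 1 2 R) :
    ((uleg k A n 1 2 R)⁻¹ *
        ordProd 3 n (fun i => (uleg k A n 2 i R * uleg k A n 1 i R)⁻¹) *
        uleg k A n 1 2 R : (TPow k A n)ˣ) =
      ordProd 3 n (fun i => (uleg k A n 1 i R * uleg k A n 2 i R)⁻¹) := by
  rw [ordProd, ordProd]
  refine inv_mul_list_prod_map_mul _ fun i hi => inv_mul_inv_mul_mul_eq_of_mul_mul_eq ?_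
  rw [List.mem_range'_1] at hi
  have hi1 : i - 1 + 1 = i := by omega
  simpa only [hi1] using
    uleg_yangBaxter_of_ne k A n (a := ⟨0, by omega⟩) (b := ⟨1, by omega⟩) (c := ⟨i - 1, by omega⟩)
      (Fin.ne_of_val_ne (by dsimp only; omega)) (Fin.ne_of_val_ne (by dsimp only; omega))
      (Fin.ne_of_val_ne (by dsimp only; omega))
      R hQYBE

end
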